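/- Let v be a fake Gauss word of length n (a pattern whose double-point letters occur exactly twice and whose cusp letters occur exactly once), and for 0 ≤ k < n let rotᵏ v denote the cyclic rotation of v by k positions. Set ε₀ = 1 and ε_{k+1} = −ε_k if the occurrence rotated at step k+1 belongs to a double-point letter, ε_{k+1} = ε_k if it belongs to a cusp letter. Then for every front word w, the sum Σ_{k=0}^{n−1} ε_k ⟨rotᵏ v, w⟩ is unchanged when w is replaced by its image under either front base point move. (This is Proposition [ , ] for fronts, underlying the invariant FI₃.) -/

import Mathlib

open Finset

/-- The canonical pattern of a word: each position is labelled by the index of the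
first occurrence of its letter. Two words are isomorphic iff they have the same pattern. -/
def patternOf {α : Type*} [DecidableEq α] (l : List α) : List ℕ :=
  l.map (fun a => l.idxOf a)

/-- The sub-word of `w` determined by a set `S` of letters: read, in order, exactly
those values of `w` lying in `S`. -/
def subword {α : Type*} [DecidableEq α] (w : List α) (S : Finset α) : List α :=
  w.filter (fun a => decide (a ∈ S))

/-- The pairing `⟨v, w⟩`: the sum, over all subsets `S` of the alphabet of `w` whose
induced sub-word is isomorphic to the pattern `v`, of `∏_{a ∈ S} sgn a`. -/
def pair {α : Type*} [DecidableEq α] (v : List ℕ) (w : List α) (sgn : α → ℤ) : ℤ :=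
  ∑ S ∈ w.toFinset.powerset,
    if patternOf (subword w S) = patternOf v then ∏ a ∈ S, sgn a else 0

/-! A set `S` of letters of `w = a :: x` contributes to both sides through its sub-word `u`.
If `a ∉ S` the move leaves `u` unchanged; if `a ∈ S` it rotates `u` by one step. The rotated
`u` matches `rotᵏ⁺¹ v` exactly when `u` matches `rotᵏ v`, and then `a` has the same
multiplicity in `u` as `vₖ` in `v`, so `ε_{k+1} = ε_k · (−1)^[a is a double point]`, which is
exactly the change of `sgn a` under the move. Re-indexing `k ↦ k + 1` is cyclic because
`ε_n = ε_0`: each double-point letter of `v` is counted twice. -/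

section

variable {α β : Type*} [DecidableEq α] [DecidableEq β]

theorem List.idxOf_map_of_injOn {f : α → β} {l : List α} (hf : Set.InjOn f {a | a ∈ l})
    {a : α} (ha : a ∈ l) : (l.map f).idxOf (f a) = l.idxOf a := by
  induction l with
  | nil => simp at ha
  | cons b l ih =>
    by_cases hab : b = a
    · subst hab; simp
    · have hf' : f b ≠ f a := fun h => hab (hf List.mem_cons_self ha h)
      rw [List.map_cons, List.idxOf_cons_ne _ hf', List.idxOf_cons_ne _ hab,
        ih (hf.mono fun c hc => List.mem_cons_of_mem _ hc) (by simpa [Ne.symm hab] using ha)]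

theorem patternOf_map_of_injOn {f : α → β} {l : List α} (hf : Set.InjOn f {a | a ∈ l}) :
    patternOf (l.map f) = patternOf l := by
  simp only [patternOf, List.map_map]
  exact List.map_congr_left fun a ha => List.idxOf_map_of_injOn hf ha

theorem patternOf_rotate (l : List α) (k : ℕ) :
    patternOf (l.rotate k) = patternOf ((patternOf l).rotate k) := by
  have hinj : Set.InjOn l.idxOf {a | a ∈ l.rotate k} := fun a ha b _ h =>
    (List.idxOf_inj (List.mem_rotate.mp ha)).mp h
  rw [← patternOf_map_of_injOn hinj, List.map_rotate]
  rfl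

theorem patternOf_rotate_congr {l : List α} {m : List β} (h : patternOf l = patternOf m)
    (k : ℕ) :
    patternOf (l.rotate k) = patternOf (m.rotate k) := by
  rw [patternOf_rotate, h, ← patternOf_rotate]

theorem length_patternOf (l : List α) : (patternOf l).length = l.length := List.length_map _

theorem patternOf_rotate_one_iff {l : List α} {m : List β} :
    patternOf (l.rotate 1) = patternOf (m.rotate 1) ↔ patternOf l = patternOf m := by
  refine ⟨fun h => ?_, fun h => patternOf_rotate_congr h 1⟩
  have hlen : l.length = m.length := by
    simpa only [length_patternOf, List.length_rotate] using congrArg List.length h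
  rcases Nat.eq_zero_or_pos l.length with h0 | hpos
  · rw [List.eq_nil_of_length_eq_zero h0, List.eq_nil_of_length_eq_zero (hlen.symm.trans h0)]
    rfl
  · have := patternOf_rotate_congr h (l.length - 1)
    rwa [List.rotate_rotate, List.rotate_rotate, Nat.add_sub_cancel' hpos, List.rotate_length,
      hlen, List.rotate_length] at this

theorem count_idxOf_patternOf (l : List α) (a : α) :
    (patternOf l).count (l.idxOf a) = l.count a := by
  rw [patternOf, List.count_eq_countP, List.countP_map, List.count_eq_countP]
  exact List.countP_congr fun b hb => by simp [List.idxOf_inj hb]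

theorem map_count_patternOf (l : List α) :
    (patternOf l).map (patternOf l).count = l.map l.count := by
  rw [patternOf, List.map_map]
  exact List.map_congr_left fun a _ => count_idxOf_patternOf l a

theorem map_count_eq_of_patternOf_eq {l : List α} {m : List β} (h : patternOf l = patternOf m) :
    l.map l.count = m.map m.count := by
  rw [← map_count_patternOf, h, map_count_patternOf]

theorem count_head_eq_of_patternOf_eq {a : α} {t : List α} {m : List β} {k : ℕ}
    (hk : k < m.length) (h : patternOf (a :: t) = patternOf (m.rotate k)) :
    (a :: t).count a = m.count m[k] := by
  have := congrArg List.head? (map_count_eq_of_patternOf_eq h)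
  rw [List.head?_map, List.head?_map, List.head?_rotate hk, List.getElem?_eq_getElem hk] at this
  simpa [(List.rotate_perm m k).count_eq] using this

def cyclicSign (v : List β) (k : ℕ) : ℤ :=
  (-1) ^ ((v.take k).countP fun c => decide (v.count c = 2))

def doublePointSign (l : List β) (c : β) : ℤ := if l.count c = 2 then -1 else 1

theorem List.even_countP_count_eq_two (l : List β) :
    Even (l.countP fun c => decide (l.count c = 2)) := by
  rw [← List.sum_map_count_dedup_filter_eq_countP,
    List.map_congr_left (g := fun _ => 2) fun c hc => by simpa using (List.mem_filter.mp hc).2]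
  simp

theorem cyclicSign_zero (v : List β) : cyclicSign v 0 = 1 := by simp [cyclicSign]

theorem cyclicSign_length (v : List β) : cyclicSign v v.length = 1 := by
  rw [cyclicSign, List.take_length, v.even_countP_count_eq_two.neg_one_pow]

theorem cyclicSign_succ (v : List β) {k : ℕ} (hk : k < v.length) :
    cyclicSign v (k + 1) = cyclicSign v k * doublePointSign v v[k] := by
  simp only [cyclicSign, doublePointSign, List.take_add_one, List.getElem?_eq_getElem hk,
    List.countP_append, pow_add]
  split_ifs with h <;> simp [h]

theorem doublePointSign_mul_self (l : List β) (c : β) :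
    doublePointSign l c * doublePointSign l c = 1 := by
  unfold doublePointSign; split_ifs <;> norm_num

theorem Finset.sum_range_succ_shift_of_eq {M : Type*} [AddCancelCommMonoid M] {n : ℕ}
    (f : ℕ → M) (h : f n = f 0) :
    ∑ k ∈ Finset.range n, f (k + 1) = ∑ k ∈ Finset.range n, f k := by
  apply add_right_cancel (b := f 0)
  rw [← Finset.sum_range_succ', Finset.sum_range_succ, h]

def cyclicMatch (v : List β) (u : List α) : ℤ :=
  ∑ k ∈ Finset.range v.length,
    cyclicSign v k * if patternOf u = patternOf (v.rotate k) then 1 else 0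

theorem cyclicMatch_rotate_one (v : List β) (a : α) (t : List α) :
    cyclicMatch v ((a :: t).rotate 1) = doublePointSign (a :: t) a * cyclicMatch v (a :: t) := by
  set F : ℕ → ℤ := fun k =>
    cyclicSign v k * if patternOf ((a :: t).rotate 1) = patternOf (v.rotate k) then 1 else 0
  have hper : F v.length = F 0 := by
    simp only [F, cyclicSign_length, cyclicSign_zero, List.rotate_length, List.rotate_zero]
  rw [cyclicMatch, ← sum_range_succ_shift_of_eq F hper, cyclicMatch, Finset.mul_sum]
  refine Finset.sum_congr rfl fun k hk => ?_
  have hk : k < v.length := Finset.mem_range.mp hk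
  simp only [F, ← List.rotate_rotate, patternOf_rotate_one_iff, cyclicSign_succ v hk]
  split_ifs with h
  · simp only [doublePointSign, count_head_eq_of_patternOf_eq hk h]
    ring
  · simp

theorem sum_cyclicSign_mul_pair (v : List ℕ) (w : List α) (sgn : α → ℤ) :
    ∑ k ∈ Finset.range v.length, cyclicSign v k * pair (v.rotate k) w sgn =
      ∑ S ∈ w.toFinset.powerset, (∏ a ∈ S, sgn a) * cyclicMatch v (subword w S) := by
  simp only [pair, cyclicMatch, Finset.mul_sum]
  rw [Finset.sum_comm]
  refine Finset.sum_congr rfl fun S _ => Finset.sum_congr rfl fun k _ => ?_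
  split_ifs <;> ring

theorem sum_cyclicSign_mul_pair_rotate_one (v : List ℕ) (a : α) (x : List α)
    (sgn : α → ℤ) :
    ∑ k ∈ Finset.range v.length, cyclicSign v k * pair (v.rotate k) (a :: x) sgn =
      ∑ k ∈ Finset.range v.length, cyclicSign v k *
        pair (v.rotate k) (x ++ [a])
          (Function.update sgn a (doublePointSign (a :: x) a * sgn a)) := by
  have hfin : (x ++ [a]).toFinset = (a :: x).toFinset := by ext; simp
  rw [sum_cyclicSign_mul_pair, sum_cyclicSign_mul_pair, hfin]
  refine Finset.sum_congr rfl fun S _ => ?_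
  by_cases haS : a ∈ S
  · have hsign : doublePointSign (a :: subword x S) a = doublePointSign (a :: x) a := by
      simp [doublePointSign, subword, List.count_filter, haS]
    have hcons : subword (a :: x) S = a :: subword x S := by simp [subword, haS]
    have hsnoc : subword (x ++ [a]) S = (a :: subword x S).rotate 1 := by simp [subword, haS]
    rw [hcons, hsnoc, cyclicMatch_rotate_one, hsign, Finset.prod_update_of_mem haS,
      Finset.sdiff_singleton_eq_erase, ← Finset.mul_prod_erase S sgn haS]
    linear_combination (-(sgn a * ∏ c ∈ S.erase a, sgn c) * cyclicMatch v (a :: subword x S)) *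
      doublePointSign_mul_self (a :: x) a
  · rw [Finset.prod_update_of_notMem haS]
    simp [subword, haS]

end

theorem front_cyclic_sum_base_point_invariant_general {α : Type*} [DecidableEq α]
    (n : ℕ) (v : List ℕ) (hvlen : v.length = n)
    (a : α) (x : List α) (sgn : α → ℤ) :
    ((a :: x).count a = 2 →
      ∑ k ∈ Finset.range n,
          (-1 : ℤ) ^ ((v.take k).countP (fun c => decide (v.count c = 2))) *
            pair (v.rotate k) (a :: x) sgn =
        ∑ k ∈ Finset.range n,
          (-1 : ℤ) ^ ((v.take k).countP (fun c => decide (v.count c = 2))) *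
            pair (v.rotate k) (x ++ [a]) (Function.update sgn a (-(sgn a)))) ∧
    ((a :: x).count a = 1 →
      ∑ k ∈ Finset.range n,
          (-1 : ℤ) ^ ((v.take k).countP (fun c => decide (v.count c = 2))) *
            pair (v.rotate k) (a :: x) sgn =
        ∑ k ∈ Finset.range n,
          (-1 : ℤ) ^ ((v.take k).countP (fun c => decide (v.count c = 2))) *
            pair (v.rotate k) (x ++ [a]) sgn) := by
  subst hvlen
  refine ⟨fun h2 => ?_, fun h1 => ?_⟩
  · have := sum_cyclicSign_mul_pair_rotate_one v a x sgn
    rwa [doublePointSign, if_pos h2, neg_one_mul] at this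
  · have := sum_cyclicSign_mul_pair_rotate_one v a x sgn
    rwa [doublePointSign, if_neg (by omega), one_mul, Function.update_eq_self] at this

/-- for a fake Gauss word `v` of length `n` (double-point letters
occur twice, cusp letters once), with signs `ε_k = (−1)^(number of occurrences of
double-point letters among the first k positions)`, the sum
`Σ_{k<n} ε_k ⟨rotᵏ v, w⟩` is unchanged when the front word `w` is replaced by its
image under either front base point move. -/
theorem front_cyclic_sum_base_point_invariant {α : Type*} [DecidableEq α]
    (n : ℕ) (v : List ℕ) (hvlen : v.length = n)
    (hvFake : ∀ c ∈ v, v.count c = 1 ∨ v.count c = 2)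
    (a : α) (x : List α) (sgn : α → ℤ)
    (hFront : ∀ c ∈ a :: x, (a :: x).count c = 1 ∨ (a :: x).count c = 2)
    (hsgn : ∀ c, sgn c = 1 ∨ sgn c = -1) :
    ((a :: x).count a = 2 →
      ∑ k ∈ Finset.range n,
          (-1 : ℤ) ^ ((v.take k).countP (fun c => decide (v.count c = 2))) *
            pair (v.rotate k) (a :: x) sgn =
        ∑ k ∈ Finset.range n,
          (-1 : ℤ) ^ ((v.take k).countP (fun c => decide (v.count c = 2))) *
            pair (v.rotate k) (x ++ [a]) (Function.update sgn a (-(sgn a)))) ∧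
    ((a :: x).count a = 1 →
      ∑ k ∈ Finset.range n,
          (-1 : ℤ) ^ ((v.take k).countP (fun c => decide (v.count c = 2))) *
            pair (v.rotate k) (a :: x) sgn =
        ∑ k ∈ Finset.range n,
          (-1 : ℤ) ^ ((v.take k).countP (fun c => decide (v.count c = 2))) *
            pair (v.rotate k) (x ++ [a]) sgn) :=
  front_cyclic_sum_base_point_invariant_general n v hvlen a x sgn
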